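/- Let μ⋆ be a Borel probability measure on ℝ^d with a density f⋆ with respect to Lebesgue measure satisfying f⋆(v) ≥ c e^{−z|v|²} for some constants c > 0 and z < ∞. Then for every λ > 0 there exists a constant a_λ < ∞, depending only on λ, c, z and d, such that for every Borel probability measure ξ on ℝ^d with ∫|v|² dξ < ∞, H(g_λ⋆ξ | μ⋆) ≤ a_λ (1 + ∫|v|² dξ), where g_λ⋆ξ is the probability measure with density u ↦ ∫ g_λ(u−v) ξ(dv). -/

import Mathlib

open MeasureTheory
open scoped ENNReal

/-- The Gaussian density `g_λ(x) = (2πλ)^{−d/2} exp(−|x|²/(2λ))` on `ℝ^d`. -/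
noncomputable def gaussDensity (d : ℕ) (lam : ℝ) (x : EuclideanSpace ℝ (Fin d)) : ℝ :=
  (2 * Real.pi * lam) ^ (-(d : ℝ) / 2) * Real.exp (-‖x‖ ^ 2 / (2 * lam))

open Classical in
/-- The relative entropy `H(ν|μ) ∈ [0,∞]` of probability measures, expressed through the
nonnegative integrand `f log f − f + 1` with `f = dν/dμ` (for probability measures this
agrees with `∫ (dν/dμ) log(dν/dμ) dμ`), and `∞` if `ν` is not absolutely continuous. -/
noncomputable def relEnt {α : Type*} [MeasurableSpace α] (ν μ : Measure α) : ℝ≥0∞ :=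
  if ν ≪ μ then
    ∫⁻ x, ENNReal.ofReal ((ν.rnDeriv μ x).toReal * Real.log ((ν.rnDeriv μ x).toReal)
      - (ν.rnDeriv μ x).toReal + 1) ∂μ
  else ⊤

/-!
The density `h = g_λ ⋆ ξ` is bounded by `sup g_λ = (2πλ)^{-d/2}` and `f⋆ ≥ c e^{-z|v|²}`, so
`log (h / f⋆) ≤ A (1 + |v|²)` with `A` depending only on `λ, c, z, d`. Since
`t log t - t + 1 ≤ t log⁺ t + 1`, the relative entropy is then at most `1 + A ∫ (1 + |u|²) h(u) du`.
Finally `1 + |w + v|² ≤ 2 (1 + |w|²) (1 + |v|²)`, so this weighted mass of the convolution is at most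
`2 ∫ (1 + |w|²) g_λ(w) dw · ∫ (1 + |v|²) dξ(v)`, and the Gaussian moment is finite.
-/

open Real

theorem one_add_mul_exp_neg_le {b s : ℝ} (hb : 0 < b) (hs : 0 ≤ s) :
    (1 + s) * exp (-b * s) ≤ (1 + 2 / b) * exp (-(b / 2) * s) := by
  set e := exp (-(b / 2) * s)
  have he : 0 < e := exp_pos _
  have he1 : e ≤ 1 := exp_le_one_iff.mpr (by nlinarith)
  have hsq : exp (-b * s) = e * e := by rw [← exp_add]; ring_nf
  have hse : b / 2 * s * e ≤ 1 := by
    have h := mul_le_mul_of_nonneg_right (add_one_le_exp (b / 2 * s)) he.le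
    rw [← exp_add, show b / 2 * s + -(b / 2) * s = 0 by ring, exp_zero] at h
    nlinarith
  have hse' : s * e ≤ 2 / b := by
    rw [le_div_iff₀ hb]; nlinarith
  rw [hsq]
  nlinarith [mul_le_mul_of_nonneg_right hse' he.le]

theorem integrable_one_add_sq_mul_exp_neg_mul_sq_norm {V : Type*} [NormedAddCommGroup V]
    [InnerProductSpace ℝ V] [FiniteDimensional ℝ V] [MeasurableSpace V] [BorelSpace V]
    {b : ℝ} (hb : 0 < b) :
    Integrable fun v : V => (1 + ‖v‖ ^ 2) * exp (-b * ‖v‖ ^ 2) := by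
  have hexp : Integrable fun v : V => exp (-(b / 2) * ‖v‖ ^ 2) := by
    have h := GaussianFourier.integrable_cexp_neg_mul_sq_norm_add (V := V)
      (b := ((b / 2 : ℝ) : ℂ)) (by simpa using hb) 0 0
    refine h.norm.congr (Filter.Eventually.of_forall fun v => ?_)
    simp only [zero_mul, add_zero]
    rw [show -((b / 2 : ℝ) : ℂ) * (‖v‖ : ℂ) ^ 2 = ((-(b / 2) * ‖v‖ ^ 2 : ℝ) : ℂ) by push_cast; ring,
      Complex.norm_exp_ofReal]
  refine (hexp.const_mul (1 + 2 / b)).mono' (by fun_prop) (Filter.Eventually.of_forall fun v => ?_)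
  rw [Real.norm_of_nonneg (by positivity)]
  exact one_add_mul_exp_neg_le hb (sq_nonneg _)

theorem log_div_le_mul_one_add {h f M c z s : ℝ} (hh : 0 < h) (hhM : h ≤ M) (hc : 0 < c)
    (hf : c * exp (-z * s) ≤ f) (hs : 0 ≤ s) :
    log (h / f) ≤ (|log M - log c| + |z|) * (1 + s) := by
  have hf_pos : 0 < f := lt_of_lt_of_le (by positivity) hf
  have hlog_f : log c - z * s ≤ log f := by
    calc log c - z * s = log (c * exp (-z * s)) := by
          rw [log_mul hc.ne' (exp_ne_zero _), log_exp]; ring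
      _ ≤ log f := log_le_log (by positivity) hf
  have hlog_h : log h ≤ log M := log_le_log hh hhM
  rw [log_div hh.ne' hf_pos.ne']
  nlinarith [le_abs_self (log M - log c), le_abs_self z, abs_nonneg (log M - log c),
    abs_nonneg z, mul_le_mul_of_nonneg_right (le_abs_self z) hs]

theorem ofReal_mul_log_sub_add_one_le {t L : ℝ} (ht : 0 ≤ t) (hlog : 0 < t → log t ≤ L) :
    ENNReal.ofReal (t * log t - t + 1) ≤ ENNReal.ofReal t * ENNReal.ofReal L + 1 := by
  have hmul : t * log t ≤ t * max L 0 := by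
    rcases ht.eq_or_lt with rfl | ht_pos
    · simp
    · exact mul_le_mul_of_nonneg_left ((hlog ht_pos).trans (le_max_left _ _)) ht
  calc ENNReal.ofReal (t * log t - t + 1)
      ≤ ENNReal.ofReal (t * max L 0 + 1) := ENNReal.ofReal_le_ofReal (by linarith)
    _ = ENNReal.ofReal t * ENNReal.ofReal L + 1 := by
      rw [ENNReal.ofReal_add (by positivity) zero_le_one, ENNReal.ofReal_mul ht,
        ENNReal.ofReal_max, ENNReal.ofReal_zero, max_eq_left zero_le, ENNReal.ofReal_one]

theorem relEnt_withDensity_le {α : Type*} [MeasurableSpace α] {μ : Measure α}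
    [SigmaFinite μ] {ψ : α → ℝ≥0∞} (hψ : Measurable ψ) {L : α → ℝ} (hL : Measurable L)
    (hlog : ∀ x, 0 < (ψ x).toReal → log (ψ x).toReal ≤ L x) :
    relEnt (μ.withDensity ψ) μ ≤ ∫⁻ x, ENNReal.ofReal (L x) ∂μ.withDensity ψ + μ Set.univ := by
  rw [relEnt, if_pos (withDensity_absolutelyContinuous μ ψ),
    lintegral_withDensity_eq_lintegral_mul _ hψ hL.ennreal_ofReal, ← lintegral_one,
    ← lintegral_add_right _ measurable_const]
  refine lintegral_mono_ae ?_
  filter_upwards [Measure.rnDeriv_withDensity μ hψ] with x hx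
  rw [hx]
  by_cases htop : ψ x = ⊤
  · simp [htop]
  · calc _ ≤ ENNReal.ofReal (ψ x).toReal * ENNReal.ofReal (L x) + 1 :=
          ofReal_mul_log_sub_add_one_le ENNReal.toReal_nonneg (hlog x)
      _ = _ := by rw [ENNReal.ofReal_toReal htop]; rfl

theorem withDensity_eq_withDensity_withDensity_div {α : Type*} [MeasurableSpace α]
    (μ : Measure α) {f g : α → ℝ≥0∞} (hf : Measurable f) (hg : Measurable g)
    (hf_ne_zero : ∀ x, f x ≠ 0) (hf_ne_top : ∀ x, f x ≠ ⊤) :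
    μ.withDensity g = (μ.withDensity f).withDensity fun x => g x / f x := by
  change μ.withDensity g = (μ.withDensity f).withDensity (g / f)
  rw [← withDensity_mul _ hf (hg.div hf)]
  congr 1
  funext x
  exact (ENNReal.mul_div_cancel (hf_ne_zero x) (hf_ne_top x)).symm

theorem ofReal_one_add_norm_add_sq_le {E : Type*} [SeminormedAddGroup E] (w v : E) :
    ENNReal.ofReal (1 + ‖w + v‖ ^ 2)
      ≤ 2 * ENNReal.ofReal (1 + ‖w‖ ^ 2) * ENNReal.ofReal (1 + ‖v‖ ^ 2) := by
  have hsq : ‖w + v‖ ^ 2 ≤ 2 * ‖w‖ ^ 2 + 2 * ‖v‖ ^ 2 := by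
    nlinarith [norm_add_le w v, norm_nonneg (w + v), sq_nonneg (‖w‖ - ‖v‖)]
  rw [← ENNReal.ofReal_ofNat 2, ← ENNReal.ofReal_mul zero_le_two,
    ← ENNReal.ofReal_mul (by positivity)]
  exact ENNReal.ofReal_le_ofReal (by nlinarith [sq_nonneg ‖w‖, sq_nonneg ‖v‖])

theorem lintegral_lintegral_sub_mul_le {G : Type*} [MeasurableSpace G] [AddGroup G]
    [MeasurableAdd G] [MeasurableSub₂ G] {μ ξ : Measure G} [SFinite μ] [μ.IsAddRightInvariant]
    [SFinite ξ] {g φ : G → ℝ≥0∞} (hg : Measurable g) (hφ : Measurable φ) {C : ℝ≥0∞}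
    (hφ_add : ∀ w v, φ (w + v) ≤ C * φ w * φ v) :
    ∫⁻ u, (∫⁻ v, g (u - v) ∂ξ) * φ u ∂μ ≤ C * (∫⁻ w, g w * φ w ∂μ) * ∫⁻ v, φ v ∂ξ := by
  have hmeas : Measurable fun p : G × G => g (p.1 - p.2) * φ p.1 :=
    (hg.comp (measurable_fst.sub measurable_snd)).mul (hφ.comp measurable_fst)
  have hshift : ∀ v, ∫⁻ u, g (u - v) * φ u ∂μ ≤ (C * ∫⁻ w, g w * φ w ∂μ) * φ v := by
    intro v
    rw [← lintegral_add_right_eq_self _ v]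
    simp only [add_sub_cancel_right]
    calc ∫⁻ w, g w * φ (w + v) ∂μ ≤ ∫⁻ w, (C * φ v) * (g w * φ w) ∂μ :=
          lintegral_mono fun w => by
            rw [mul_comm (C * φ v), mul_assoc]
            gcongr
            calc φ (w + v) ≤ C * φ w * φ v := hφ_add w v
              _ = φ w * (C * φ v) := by ring
      _ = (C * ∫⁻ w, g w * φ w ∂μ) * φ v := by
          rw [lintegral_const_mul _ (by fun_prop : Measurable fun w => g w * φ w)]; ring
  calc ∫⁻ u, (∫⁻ v, g (u - v) ∂ξ) * φ u ∂μ = ∫⁻ v, ∫⁻ u, g (u - v) * φ u ∂μ ∂ξ := by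
        rw [← lintegral_lintegral_swap hmeas.aemeasurable]
        refine lintegral_congr fun u => ?_
        exact (lintegral_mul_const _ (by fun_prop)).symm
    _ ≤ ∫⁻ v, (C * ∫⁻ w, g w * φ w ∂μ) * φ v ∂ξ := lintegral_mono hshift
    _ = C * (∫⁻ w, g w * φ w ∂μ) * ∫⁻ v, φ v ∂ξ := lintegral_const_mul _ hφ

section Gaussian

variable {d : ℕ} {lam : ℝ} {ξ : Measure (EuclideanSpace ℝ (Fin d))}

theorem gaussDensity_nonneg (hlam : 0 ≤ lam) (x : EuclideanSpace ℝ (Fin d)) :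
    0 ≤ gaussDensity d lam x :=
  mul_nonneg (rpow_nonneg (by positivity) _) (exp_pos _).le

theorem gaussDensity_le (hlam : 0 ≤ lam) (x : EuclideanSpace ℝ (Fin d)) :
    gaussDensity d lam x ≤ (2 * π * lam) ^ (-(d : ℝ) / 2) := by
  refine mul_le_of_le_one_right (rpow_nonneg (by positivity) _) (exp_le_one_iff.mpr ?_)
  exact div_nonpos_of_nonpos_of_nonneg (neg_nonpos.mpr (sq_nonneg ‖x‖)) (by positivity)

@[fun_prop]
theorem continuous_gaussDensity : Continuous (gaussDensity d lam) := by
  unfold gaussDensity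
  fun_prop

theorem lintegral_gaussDensity_mul_lt_top (hlam : 0 < lam) :
    ∫⁻ w, ENNReal.ofReal (gaussDensity d lam w) * ENNReal.ofReal (1 + ‖w‖ ^ 2) < ⊤ := by
  have hint := (integrable_one_add_sq_mul_exp_neg_mul_sq_norm
    (V := EuclideanSpace ℝ (Fin d)) (b := 1 / (2 * lam)) (by positivity)).const_mul
    ((2 * π * lam) ^ (-(d : ℝ) / 2))
  refine lt_of_eq_of_lt (lintegral_congr fun w => ?_) hint.lintegral_lt_top
  rw [← ENNReal.ofReal_mul (gaussDensity_nonneg hlam.le w), gaussDensity]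
  ring_nf

noncomputable def gaussConv (d : ℕ) (lam : ℝ) (ξ : Measure (EuclideanSpace ℝ (Fin d)))
    (u : EuclideanSpace ℝ (Fin d)) : ℝ :=
  ∫ v, gaussDensity d lam (u - v) ∂ξ

@[fun_prop]
theorem measurable_gaussConv [SFinite ξ] : Measurable (gaussConv d lam ξ) :=
  (continuous_gaussDensity.comp (continuous_fst.sub continuous_snd)).stronglyMeasurable
    |>.integral_prod_right'.measurable

theorem ofReal_gaussConv_le_lintegral (hlam : 0 ≤ lam) (u : EuclideanSpace ℝ (Fin d)) :
    ENNReal.ofReal (gaussConv d lam ξ u) ≤ ∫⁻ v, ENNReal.ofReal (gaussDensity d lam (u - v)) ∂ξ := by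
  calc ENNReal.ofReal (gaussConv d lam ξ u) ≤ ‖gaussConv d lam ξ u‖ₑ :=
        ENNReal.ofReal_le_of_le_toReal (by simpa using le_abs_self _)
    _ ≤ ∫⁻ v, ‖gaussDensity d lam (u - v)‖ₑ ∂ξ := enorm_integral_le_lintegral_enorm _
    _ = ∫⁻ v, ENNReal.ofReal (gaussDensity d lam (u - v)) ∂ξ :=
        lintegral_congr fun v => Real.enorm_of_nonneg (gaussDensity_nonneg hlam _)

theorem gaussConv_le [IsProbabilityMeasure ξ] (hlam : 0 ≤ lam) (u : EuclideanSpace ℝ (Fin d)) :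
    gaussConv d lam ξ u ≤ (2 * π * lam) ^ (-(d : ℝ) / 2) := by
  have h := (ofReal_gaussConv_le_lintegral (ξ := ξ) hlam u).trans
    (lintegral_mono fun v => ENNReal.ofReal_le_ofReal (gaussDensity_le hlam (u - v)))
  rwa [lintegral_const, measure_univ, mul_one,
    ENNReal.ofReal_le_ofReal_iff (rpow_nonneg (by positivity) _)] at h

theorem lintegral_gaussConv_mul_le [SFinite ξ] (hlam : 0 ≤ lam) :
    ∫⁻ u, ENNReal.ofReal (gaussConv d lam ξ u) * ENNReal.ofReal (1 + ‖u‖ ^ 2)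
      ≤ 2 * (∫⁻ w, ENNReal.ofReal (gaussDensity d lam w) * ENNReal.ofReal (1 + ‖w‖ ^ 2))
          * ∫⁻ v, ENNReal.ofReal (1 + ‖v‖ ^ 2) ∂ξ :=
  (lintegral_mono fun u => by gcongr; exact ofReal_gaussConv_le_lintegral hlam u).trans
    (lintegral_lintegral_sub_mul_le (by fun_prop) (by fun_prop) ofReal_one_add_norm_add_sq_le)

theorem relEnt_gaussConv_le {c z : ℝ} (hlam : 0 < lam) (hc : 0 < c) [IsProbabilityMeasure ξ]
    {fstar : EuclideanSpace ℝ (Fin d) → ℝ} (hf : Measurable fstar)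
    [IsProbabilityMeasure (volume.withDensity fun v => ENNReal.ofReal (fstar v))]
    (hlow : ∀ v, c * exp (-z * ‖v‖ ^ 2) ≤ fstar v) :
    relEnt (volume.withDensity fun u => ENNReal.ofReal (gaussConv d lam ξ u))
        (volume.withDensity fun v => ENNReal.ofReal (fstar v))
      ≤ ENNReal.ofReal (|log ((2 * π * lam) ^ (-(d : ℝ) / 2)) - log c| + |z|)
          * (2 * (∫⁻ w, ENNReal.ofReal (gaussDensity d lam w) * ENNReal.ofReal (1 + ‖w‖ ^ 2))
            * ∫⁻ v, ENNReal.ofReal (1 + ‖v‖ ^ 2) ∂ξ) + 1 := by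
  set A := |log ((2 * π * lam) ^ (-(d : ℝ) / 2)) - log c| + |z|
  have hf_pos : ∀ v, 0 < fstar v := fun v => lt_of_lt_of_le (by positivity) (hlow v)
  set ψ := fun x => ENNReal.ofReal (gaussConv d lam ξ x) / ENNReal.ofReal (fstar x)
  have hψ : Measurable ψ := measurable_gaussConv.ennreal_ofReal.div hf.ennreal_ofReal
  have hν := withDensity_eq_withDensity_withDensity_div volume hf.ennreal_ofReal
    (measurable_gaussConv (lam := lam) (ξ := ξ)).ennreal_ofReal
    (fun v => ENNReal.ofReal_ne_zero_iff.mpr (hf_pos v)) (fun _ => ENNReal.ofReal_ne_top)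
  have hlog : ∀ x, 0 < (ψ x).toReal → log (ψ x).toReal ≤ A * (1 + ‖x‖ ^ 2) := by
    intro x hx
    have hconv_nonneg : 0 ≤ gaussConv d lam ξ x :=
      integral_nonneg fun v => gaussDensity_nonneg hlam.le _
    simp only [ψ, ENNReal.toReal_div, ENNReal.toReal_ofReal hconv_nonneg,
      ENNReal.toReal_ofReal (hf_pos x).le] at hx ⊢
    exact log_div_le_mul_one_add ((div_pos_iff_of_pos_right (hf_pos x)).mp hx)
      (gaussConv_le hlam.le x) hc (hlow x) (sq_nonneg _)
  rw [hν]
  refine (relEnt_withDensity_le hψ (by fun_prop) hlog).trans ?_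
  rw [← hν, measure_univ, lintegral_withDensity_eq_lintegral_mul _
    measurable_gaussConv.ennreal_ofReal (by fun_prop)]
  gcongr
  calc ∫⁻ u, ENNReal.ofReal (gaussConv d lam ξ u) * ENNReal.ofReal (A * (1 + ‖u‖ ^ 2))
      = ENNReal.ofReal A * ∫⁻ u, ENNReal.ofReal (gaussConv d lam ξ u)
          * ENNReal.ofReal (1 + ‖u‖ ^ 2) := by
        rw [← lintegral_const_mul _ (by fun_prop)]
        refine lintegral_congr fun u => ?_
        rw [ENNReal.ofReal_mul (by positivity)]
        ring
    _ ≤ _ := by gcongr; exact lintegral_gaussConv_mul_le hlam.le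

end Gaussian

/-- if `μ⋆` has density `f⋆ ≥ c e^{−z|v|²}` w.r.t. Lebesgue measure, then
for every `λ > 0` there is a constant `a_λ` (depending only on `λ, c, z, d`) such that
`H(g_λ⋆ξ | μ⋆) ≤ a_λ (1 + ∫|v|² dξ)` for every probability measure `ξ` with finite
second moment. -/
theorem entropy_of_gaussian_convolution_bound (d : ℕ) (c z : ℝ) (hc : 0 < c)
    (lam : ℝ) (hlam : 0 < lam) :
    ∃ a : ℝ, ∀ (fstar : EuclideanSpace ℝ (Fin d) → ℝ), Measurable fstar →
      ∀ (μ : Measure (EuclideanSpace ℝ (Fin d))),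
        μ = volume.withDensity (fun v => ENNReal.ofReal (fstar v)) →
        IsProbabilityMeasure μ →
        (∀ v, c * Real.exp (-z * ‖v‖ ^ 2) ≤ fstar v) →
        ∀ (ξ : Measure (EuclideanSpace ℝ (Fin d))), IsProbabilityMeasure ξ →
          Integrable (fun v => ‖v‖ ^ 2) ξ →
          relEnt (volume.withDensity fun u =>
              ENNReal.ofReal (∫ v, gaussDensity d lam (u - v) ∂ξ)) μ
            ≤ ENNReal.ofReal (a * (1 + ∫ v, ‖v‖ ^ 2 ∂ξ)) := by
  set A := ENNReal.ofReal (|log ((2 * π * lam) ^ (-(d : ℝ) / 2)) - log c| + |z|)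
  set G := ∫⁻ w, ENNReal.ofReal (gaussDensity d lam w) * ENNReal.ofReal (1 + ‖w‖ ^ 2)
  have hG : G ≠ ⊤ := (lintegral_gaussDensity_mul_lt_top hlam).ne
  refine ⟨(A * (2 * G) + 1).toReal, ?_⟩
  rintro fstar hf μ rfl hμ hlow ξ hξ hm
  have hmoment : ∫⁻ v, ENNReal.ofReal (1 + ‖v‖ ^ 2) ∂ξ = ENNReal.ofReal (1 + ∫ v, ‖v‖ ^ 2 ∂ξ) := by
    have hint : Integrable (fun v => 1 + ‖v‖ ^ 2) ξ := (integrable_const 1).add hm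
    rw [← ofReal_integral_eq_lintegral_ofReal hint
      (Filter.Eventually.of_forall fun v => by positivity), integral_add (integrable_const 1) hm,
      integral_const, probReal_univ, one_smul]
  have hone : 1 ≤ ENNReal.ofReal (1 + ∫ v, ‖v‖ ^ 2 ∂ξ) :=
    ENNReal.one_le_ofReal.mpr (le_add_of_nonneg_right (integral_nonneg fun v => by positivity))
  calc _ ≤ A * (2 * G * ∫⁻ v, ENNReal.ofReal (1 + ‖v‖ ^ 2) ∂ξ) + 1 :=
        relEnt_gaussConv_le hlam hc hf hlow
    _ ≤ (A * (2 * G) + 1) * ENNReal.ofReal (1 + ∫ v, ‖v‖ ^ 2 ∂ξ) := by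
        rw [hmoment, add_mul, one_mul, mul_assoc A]
        gcongr
    _ = _ := by
        rw [ENNReal.ofReal_mul ENNReal.toReal_nonneg, ENNReal.ofReal_toReal (by finiteness)]
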